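/- Let f be an orientation-preserving homeomorphism of the circle T = R/Z whose rotation number ρ(f) is irrational, and assume that f is not topologically conjugate to a rotation. Then h_pol(f) = 1. -/

import Mathlib

open Filter Metric Set

variable {Z : Type*} [MetricSpace Z]

/-- The dynamical metric `d_n^f(x,y) = max_{0 ≤ k ≤ n-1} d(f^k x, f^k y)`. -/
noncomputable def dynDist (f : Z → Z) (n : ℕ) (x y : Z) : ℝ :=
  ((Finset.range n).sup fun k => nndist (f^[k] x) (f^[k] y) : NNReal)

/-- `G_n^f(Y,ε)`: the minimal number of balls of radius `ε` for the metric `d_n^f`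
needed to cover `Y`. -/
noncomputable def coverNum (f : Z → Z) (n : ℕ) (Y : Set Z) (ε : ℝ) : ℕ :=
  sInf {m : ℕ | ∃ s : Finset Z, s.card = m ∧
    Y ⊆ ⋃ c ∈ s, {y : Z | dynDist f n c y ≤ ε}}

/-- The polynomial entropy of `f` on `Y`:
`h_pol(f,Y) = lim_{ε→0} limsup_{n→∞} log G_n^f(Y,ε) / log n`
(realized, by antitonicity in `ε`, as the supremum over `ε > 0`). -/
noncomputable def hpolOn (f : Z → Z) (Y : Set Z) : EReal :=
  ⨆ ε : {e : ℝ // 0 < e}, Filter.atTop.limsup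
    (fun n : ℕ => ((Real.log (coverNum f n Y ε.1) / Real.log n : ℝ) : EReal))

/-- The polynomial entropy of `f`. -/
noncomputable def hpol (f : Z → Z) : EReal := hpolOn f Set.univ

/-- The circle `𝕋 = ℝ/ℤ`. -/
abbrev Circle1 : Type := AddCircle (1 : ℝ)

/-- `f` is topologically conjugate to a rotation of the circle. -/
def ConjRotCircle (f : Circle1 ≃ₜ Circle1) : Prop :=
  ∃ (h : Circle1 ≃ₜ Circle1) (a : Circle1), ∀ x : Circle1, h (f (h.symm x)) = x + a

/-!
Poincaré's theorem gives a monotone degree-one `H` with `H ∘ F = H + ρ`. The range of `H` is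
invariant under the dense group `ℤ + ℤρ`, so `H` is continuous; were it injective, it would
conjugate `f` to the rotation by `ρ`. Hence `H` collapses a nontrivial interval, which is
wandering: its midpoint `x₀` stays at distance `δ > 0` from its forward orbit, and the first `n`
points of the backward orbit of `x₀` are `δ`-separated for `d_n`, so `G_n(ε) ≥ n` for `ε < δ/2`.
Conversely `G_n(ε) ≤ n/ε + 1` for every circle homeomorphism: the `d_n`-diameter of an arc is
at most the length of its image under the sum of the first `n` iterates of the lift.
-/

open Function Topology

lemma dist_iterate_le_dynDist {f : Z → Z} {n k : ℕ} (hk : k < n) (x y : Z) :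
    dist (f^[k] x) (f^[k] y) ≤ dynDist f n x y := by
  rw [dist_nndist, dynDist]
  exact_mod_cast Finset.le_sup (f := fun k => nndist (f^[k] x) (f^[k] y)) (Finset.mem_range.2 hk)

lemma dynDist_le_of_forall {f : Z → Z} {n : ℕ} {x y : Z} {ε : ℝ} (hε : 0 ≤ ε)
    (h : ∀ k < n, dist (f^[k] x) (f^[k] y) ≤ ε) : dynDist f n x y ≤ ε := by
  lift ε to NNReal using hε
  rw [dynDist, NNReal.coe_le_coe]
  exact Finset.sup_le fun k hk => by exact_mod_cast h k (Finset.mem_range.1 hk)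

lemma dynDist_comm (f : Z → Z) (n : ℕ) (x y : Z) : dynDist f n x y = dynDist f n y x := by
  simp only [dynDist, nndist_comm]

lemma dynDist_triangle (f : Z → Z) (n : ℕ) (x y z : Z) :
    dynDist f n x z ≤ dynDist f n x y + dynDist f n y z := by
  rw [dynDist, dynDist, dynDist, ← NNReal.coe_add, NNReal.coe_le_coe]
  exact Finset.sup_le fun k hk => (nndist_triangle _ _ _).trans (add_le_add
    (Finset.le_sup (f := fun k => nndist (f^[k] x) (f^[k] y)) hk)
    (Finset.le_sup (f := fun k => nndist (f^[k] y) (f^[k] z)) hk))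

lemma coverNum_le_card {f : Z → Z} {n : ℕ} {Y : Set Z} {ε : ℝ} {s : Finset Z}
    (hs : Y ⊆ ⋃ c ∈ s, {y | dynDist f n c y ≤ ε}) : coverNum f n Y ε ≤ s.card :=
  Nat.sInf_le ⟨s, rfl, hs⟩

/-- Pigeonhole: two of the points would share a ball of radius `ε`. -/
lemma le_coverNum_of_pairwise {f : Z → Z} {n : ℕ} {Y : Set Z} {ε : ℝ}
    (hcov : ∃ s : Finset Z, Y ⊆ ⋃ c ∈ s, {y | dynDist f n c y ≤ ε}) {P : ℕ → Z}
    (hPY : ∀ k < n, P k ∈ Y) (hP : ∀ j < n, ∀ k < n, j ≠ k → 2 * ε < dynDist f n (P j) (P k)) :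
    n ≤ coverNum f n Y ε := by
  obtain ⟨s, hs_card, hs⟩ := Nat.sInf_mem (s := {m : ℕ | ∃ s : Finset Z, s.card = m ∧
    Y ⊆ ⋃ c ∈ s, {y | dynDist f n c y ≤ ε}}) (let ⟨s, hs⟩ := hcov; ⟨s.card, s, rfl, hs⟩)
  have hcenter : ∀ k < n, ∃ c ∈ s, dynDist f n c (P k) ≤ ε := fun k hk => by
    simpa using hs (hPY k hk)
  have : Nonempty Z := ⟨P 0⟩
  choose! c hcs hc using hcenter
  by_contra! hlt
  obtain ⟨j, hj, k, hk, hjk, hcjk⟩ := Finset.exists_ne_map_eq_of_card_lt_of_maps_to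
    (s := Finset.range n) (t := s) (f := c) (by rw [Finset.card_range, hs_card]; exact hlt)
    (fun k hk => hcs k (Finset.mem_range.1 hk))
  rw [Finset.mem_range] at hj hk
  have := calc dynDist f n (P j) (P k)
      ≤ dynDist f n (P j) (c k) + dynDist f n (c k) (P k) := dynDist_triangle _ _ _ _ _
    _ ≤ ε + ε := by
      gcongr
      · rw [dynDist_comm, ← hcjk]; exact hc j hj
      · exact hc k hk
  linarith [hP j hj k hk hjk]

/-- At time `k` the points `g^[j] x₀` and `g^[k] x₀`, `j < k`, sit at `f^[k-j] x₀` and `x₀`. -/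
lemma le_coverNum_of_forall_le_dist_iterate {f g : Z → Z} (hfg : LeftInverse f g) {x₀ : Z}
    {δ ε : ℝ} (hx₀ : ∀ m, 0 < m → δ ≤ dist x₀ (f^[m] x₀)) (hεδ : 2 * ε < δ) {n : ℕ}
    (hcov : ∃ s : Finset Z, univ ⊆ ⋃ c ∈ s, {y | dynDist f n c y ≤ ε}) :
    n ≤ coverNum f n univ ε := by
  have hsep : ∀ j k, j < k → k < n → 2 * ε < dynDist f n (g^[j] x₀) (g^[k] x₀) := by
    intro j k hjk hk
    have hkj : f^[k] (g^[j] x₀) = f^[k - j] x₀ := by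
      rw [← Nat.sub_add_cancel hjk.le, iterate_add_apply, Nat.add_sub_cancel, hfg.iterate]
    calc 2 * ε < δ := hεδ
      _ ≤ dist (f^[k] (g^[k] x₀)) (f^[k] (g^[j] x₀)) := by
        rw [hkj, hfg.iterate]; exact hx₀ _ (Nat.sub_pos_of_lt hjk)
      _ ≤ dynDist f n (g^[j] x₀) (g^[k] x₀) := by
        rw [dist_comm]; exact dist_iterate_le_dynDist hk _ _
  refine le_coverNum_of_pairwise hcov (P := fun k => g^[k] x₀) (fun _ _ => mem_univ _)
    fun j hj k hk hjk => ?_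
  rcases hjk.lt_or_gt with h | h
  · exact hsep j k h hk
  · rw [dynDist_comm]; exact hsep k j h hj

lemma hpolOn_le_one {f : Z → Z} {Y : Set Z}
    (h : ∀ ε > 0, ∃ C ≥ 1, ∀ᶠ n : ℕ in atTop, (coverNum f n Y ε : ℝ) ≤ C * n) :
    hpolOn f Y ≤ 1 := by
  refine iSup_le fun ⟨ε, hε⟩ => ?_
  obtain ⟨C, hC1, hC⟩ := h ε hε
  have hlim : Tendsto (fun n : ℕ => ((1 + Real.log C / Real.log n : ℝ) : EReal)) atTop (𝓝 1) := by
    have := tendsto_const_nhds (x := Real.log C) |>.div_atTop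
      (Real.tendsto_log_atTop.comp tendsto_natCast_atTop_atTop)
    simpa using EReal.tendsto_coe.2 (this.const_add 1)
  refine (limsup_le_limsup ?_).trans hlim.limsup_eq.le
  filter_upwards [hC, eventually_gt_atTop 1] with n hn hn1
  have hlogn : 0 < Real.log n := Real.log_pos (by exact_mod_cast hn1)
  have hCn : 1 ≤ C * n := one_le_mul_of_one_le_of_one_le hC1 (by exact_mod_cast hn1.le)
  have hlog : Real.log (coverNum f n Y ε) ≤ Real.log C + Real.log n := by
    rw [← Real.log_mul (by positivity) (by positivity)]
    rcases (Nat.zero_le (coverNum f n Y ε)).eq_or_lt with h0 | hpos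
    · rw [← h0, Nat.cast_zero, Real.log_zero]; exact Real.log_nonneg hCn
    · exact Real.log_le_log (by exact_mod_cast hpos) hn
  refine EReal.coe_le_coe_iff.2 ?_
  rw [div_le_iff₀ hlogn, add_mul, div_mul_cancel₀ _ hlogn.ne']
  linarith

lemma one_le_hpolOn {f : Z → Z} {Y : Set Z} {ε : ℝ} (hε : 0 < ε)
    (h : ∀ᶠ n : ℕ in atTop, n ≤ coverNum f n Y ε) : 1 ≤ hpolOn f Y := by
  refine le_iSup_of_le (⟨ε, hε⟩ : {e : ℝ // 0 < e}) (le_limsup_of_frequently_le ?_)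
  refine Eventually.frequently ?_
  filter_upwards [h, eventually_gt_atTop 1] with n hn hn1
  have hlogn : 0 < Real.log n := Real.log_pos (by exact_mod_cast hn1)
  refine EReal.coe_le_coe_iff.2 ?_
  rw [le_div_iff₀ hlogn, one_mul]
  exact Real.log_le_log (by positivity) (by exact_mod_cast hn)

lemma circle_coe_eq_coe_iff {x y : ℝ} : (x : Circle1) = y ↔ ∃ k : ℤ, x = y + k := by
  rw [QuotientAddGroup.eq_iff_sub_mem, AddSubgroup.mem_zmultiples_iff]
  simp only [zsmul_eq_mul, mul_one]
  exact exists_congr fun k => by constructor <;> intro h <;> linarith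

lemma dist_circle_coe_le (u v : ℝ) : dist (u : Circle1) v ≤ |u - v| := by
  rw [dist_eq_norm, ← QuotientAddGroup.mk_sub, UnitAddCircle.norm_eq]
  simpa using round_le (u - v) 0

lemma exists_abs_sub_add_intCast_lt {u v δ : ℝ} (h : dist (u : Circle1) v < δ) :
    ∃ k : ℤ, |u - (v + k)| < δ := by
  refine ⟨round (u - v), ?_⟩
  rw [dist_eq_norm, ← QuotientAddGroup.mk_sub, UnitAddCircle.norm_eq] at h
  rwa [← sub_sub]

/-- If `F (x + 1) ≥ F x + 2`, the value `F x + 1` is attained in `(x, x + 1)`, contradicting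
injectivity of `f`. -/
lemma map_add_one_of_semiconj_coe {f : Circle1 → Circle1} (hf : Injective f) {F : ℝ → ℝ}
    (hFc : Continuous F) (hFm : StrictMono F) (hF : Semiconj ((↑) : ℝ → Circle1) F f) (x : ℝ) :
    F (x + 1) = F x + 1 := by
  obtain ⟨k, hk⟩ : ∃ k : ℤ, F (x + 1) = F x + k := circle_coe_eq_coe_iff.1 (by
    rw [hF.eq, hF.eq, AddCircle.coe_add_period])
  have hk_pos : 0 < k := by
    have := hFm (lt_add_one x)
    rw [hk] at this
    exact_mod_cast (lt_add_iff_pos_right _).1 this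
  have hk_le : k ≤ 1 := by
    by_contra! hk2
    have hk2' : (2 : ℝ) ≤ k := by exact_mod_cast hk2
    obtain ⟨y, ⟨hxy, hyx⟩, hy⟩ := intermediate_value_Ioo (by linarith) hFc.continuousOn
      (show F x + 1 ∈ Ioo (F x) (F (x + 1)) from ⟨by linarith, by rw [hk]; linarith⟩)
    obtain ⟨j, rfl⟩ : ∃ j : ℤ, y = x + j := circle_coe_eq_coe_iff.1 (hf (by
      rw [← hF.eq, ← hF.eq, hy, AddCircle.coe_add_period]))
    have : 0 < j ∧ j < 1 := by
      constructor <;> [exact_mod_cast (lt_add_iff_pos_right x).1 hxy;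
        exact_mod_cast (add_lt_add_iff_left x).1 hyx]
    omega
  rw [hk, show k = 1 by omega, Int.cast_one]

lemma CircleDeg1Lift.exists_semiconj_translationNumber_add {G : CircleDeg1Lift}
    (hG : Bijective G) : ∃ H : CircleDeg1Lift, Semiconj H G (G.translationNumber + ·) := by
  obtain ⟨H, hH⟩ := semiconj_of_bijective_of_translationNumber_eq hG
    (isUnit_iff_bijective.1 (translate (.ofAdd G.translationNumber)).isUnit)
    (translationNumber_translate _).symm
  exact ⟨H, fun x => by simpa using hH x⟩

open scoped Pointwise in
/-- The range of `H` is invariant under the translations by `1` and `ρ`, hence under the dense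
subgroup `ℤ + ℤρ`. -/
lemma CircleDeg1Lift.denseRange_of_semiconj {G H : CircleDeg1Lift} (hG : Surjective G) {ρ : ℝ}
    (hρ : Irrational ρ) (hH : Semiconj H G (ρ + ·)) : DenseRange H := by
  have hρS : ρ ∈ AddAction.stabilizer ℝ (range H) := by
    rw [AddAction.mem_stabilizer_iff, vadd_set_range, ← hG.range_comp H]
    exact congrArg range (funext fun x => (hH.eq x).symm)
  have h1S : (1 : ℝ) ∈ AddAction.stabilizer ℝ (range H) := by
    rw [AddAction.mem_stabilizer_iff, vadd_set_range,
      ← (Equiv.addRight (1 : ℝ)).surjective.range_comp H]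
    exact congrArg range (funext fun x => by simp [H.map_add_one, add_comm])
  have hS : AddSubgroup.closure {ρ, 1} ≤ AddAction.stabilizer ℝ (range H) :=
    (AddSubgroup.closure_le _).2 (pair_subset hρS h1S)
  have hdense : Dense (AddSubgroup.closure {ρ, 1} : Set ℝ) :=
    dense_addSubgroupClosure_pair_iff.2 (by simpa using hρ)
  refine (hdense.vadd (H 0)).mono ?_
  rintro _ ⟨g, hg, rfl⟩
  rw [← AddAction.mem_stabilizer_iff.1 (hS hg)]
  exact ⟨H 0, mem_range_self 0, add_comm _ _⟩

lemma CircleDeg1Lift.exists_homeomorph_coe_eq {H : CircleDeg1Lift} (hc : Continuous H)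
    (hinj : Injective H) : ∃ h : Circle1 ≃ₜ Circle1, ∀ x : ℝ, h x = H x := by
  have hper : Periodic (fun x => (H x : Circle1)) 1 := fun x => by simp
  have hcont : Continuous hper.lift := (continuous_quotient_mk'.comp hc).quotient_liftOn' _
  have hbij : Bijective hper.lift := by
    refine ⟨fun p q hpq => ?_, fun q => ?_⟩
    · induction p using QuotientAddGroup.induction_on with | H x =>
      induction q using QuotientAddGroup.induction_on with | H y =>
      obtain ⟨k, hk⟩ := circle_coe_eq_coe_iff.1 hpq
      rw [← H.map_add_int] at hk
      exact circle_coe_eq_coe_iff.2 ⟨k, hinj hk⟩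
    · induction q using QuotientAddGroup.induction_on with | H y =>
      obtain ⟨x, rfl⟩ := H.continuous_iff_surjective.1 hc y
      exact ⟨x, rfl⟩
  exact ⟨hcont.homeoOfEquivCompactToT2 (f := Equiv.ofBijective _ hbij), fun _ => rfl⟩

lemma conjRotCircle_of_semiconj {f : Circle1 ≃ₜ Circle1} {F : ℝ → ℝ}
    (hF : Semiconj ((↑) : ℝ → Circle1) F f) {H : CircleDeg1Lift} (hc : Continuous H)
    (hinj : Injective H) {ρ : ℝ} (hH : Semiconj H F (ρ + ·)) : ConjRotCircle f := by
  obtain ⟨h, hh⟩ := H.exists_homeomorph_coe_eq hc hinj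
  refine ⟨h, ρ, fun q => ?_⟩
  obtain ⟨p, rfl⟩ := h.surjective q
  induction p using QuotientAddGroup.induction_on with | H x =>
  rw [h.symm_apply_apply, ← hF.eq, hh, hh, hH.eq, add_comm, QuotientAddGroup.mk_add]

/-- An interval `[a, b]` collapsed by `H` never returns close to itself: a return
`G^[m] [a, b] + k` near `[a, b]` would force `H a + m ρ + k = H a`. -/
lemma exists_forall_le_dist_iterate {f : Circle1 → Circle1} {G H : CircleDeg1Lift}
    (hG : Semiconj ((↑) : ℝ → Circle1) G f) {ρ : ℝ} (hρ : Irrational ρ)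
    (hH : Semiconj H G (ρ + ·)) (hinj : ¬ Injective H) :
    ∃ x₀ : Circle1, ∃ δ > 0, ∀ m, 0 < m → δ ≤ dist x₀ (f^[m] x₀) := by
  obtain ⟨a, b, hab, hHab⟩ : ∃ a b, a < b ∧ H a = H b := by
    obtain ⟨p, q, hpq, hne⟩ := not_injective_iff.1 hinj
    rcases hne.lt_or_gt with h | h
    · exact ⟨p, q, h, hpq⟩
    · exact ⟨q, p, h, hpq.symm⟩
  have hconst : ∀ y ∈ Icc a b, H y = H a := fun y hy =>
    le_antisymm (hHab ▸ H.monotone hy.2) (H.monotone hy.1)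
  refine ⟨((a + b) / 2 : ℝ), (b - a) / 2, by linarith, fun m hm => ?_⟩
  by_contra! hlt
  rw [← (hG.iterate_right m).eq] at hlt
  obtain ⟨k, hk⟩ := exists_abs_sub_add_intCast_lt hlt
  obtain ⟨hk₁, hk₂⟩ := abs_lt.1 hk
  have hret := hconst (G^[m] ((a + b) / 2) + k) ⟨by linarith, by linarith⟩
  rw [H.map_add_int, (hH.iterate_right m).eq, add_left_iterate, nsmul_eq_mul,
    hconst _ ⟨by linarith, by linarith⟩] at hret
  exact (hρ.natCast_mul hm.ne').ne_int (-k) (by push_cast; linarith)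

/-- Take `Ψ = (1/n) ∑_{k<n} G^[k]`. -/
lemma CircleDeg1Lift.exists_iterate_sub_le {G : CircleDeg1Lift} (hGc : Continuous G)
    (hGm : StrictMono G) {n : ℕ} (hn : n ≠ 0) :
    ∃ Ψ : CircleDeg1Lift, Continuous Ψ ∧ StrictMono Ψ ∧
      ∀ t y, t ≤ y → ∀ k < n, G^[k] y - G^[k] t ≤ n * (Ψ y - Ψ t) := by
  have hnpos : (0 : ℝ) < n := by positivity
  have hiter : ∀ k u, G^[k] (u + 1) = G^[k] u + 1 := fun k u => by
    rw [← CircleDeg1Lift.coe_pow]; exact (G ^ k).map_add_one u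
  have hsum_mono : StrictMono fun u => ∑ k ∈ Finset.range n, G^[k] u := fun u v huv =>
    Finset.sum_lt_sum_of_nonempty (Finset.nonempty_range_iff.2 hn)
      fun k _ => hGm.iterate k huv
  let Ψ : CircleDeg1Lift :=
    ⟨⟨fun u => (∑ k ∈ Finset.range n, G^[k] u) / n, fun u v huv =>
      div_le_div_of_nonneg_right (hsum_mono.monotone huv) hnpos.le⟩, fun u => by
        simp only [hiter, Finset.sum_add_distrib, Finset.sum_const, Finset.card_range,
          nsmul_eq_mul, mul_one, add_div, div_self hnpos.ne']⟩
  refine ⟨Ψ, (continuous_finsetSum _ fun k _ => hGc.iterate k).div_const _,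
    fun u v huv => div_lt_div_of_pos_right (hsum_mono huv) hnpos, fun t y hty k hk => ?_⟩
  change _ ≤ n * ((∑ k ∈ Finset.range n, G^[k] y) / n - (∑ k ∈ Finset.range n, G^[k] t) / n)
  rw [← sub_div, mul_div_cancel₀ _ hnpos.ne', ← Finset.sum_sub_distrib]
  exact Finset.single_le_sum (fun j _ => sub_nonneg.2 ((hGm.iterate j).monotone hty))
    (Finset.mem_range.2 hk)

/-- The centres are the `Ψ`-preimages of an `ε / n`-grid. -/
lemma exists_finset_cover_of_semiconj {f : Circle1 → Circle1} {G : CircleDeg1Lift}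
    (hGc : Continuous G) (hGm : StrictMono G) (hG : Semiconj ((↑) : ℝ → Circle1) G f) {n : ℕ}
    (hn : n ≠ 0) {ε : ℝ} (hε : 0 < ε) :
    ∃ s : Finset Circle1, (s.card : ℝ) ≤ n / ε + 1 ∧
      univ ⊆ ⋃ c ∈ s, {y | dynDist f n c y ≤ ε} := by
  have hnpos : (0 : ℝ) < n := by positivity
  obtain ⟨Ψ, hΨc, hΨm, hΨ⟩ := G.exists_iterate_sub_le hGc hGm hn
  have hdyn : ∀ t y : ℝ, t ≤ y → dynDist f n t y ≤ n * (Ψ y - Ψ t) := fun t y hty =>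
    dynDist_le_of_forall (mul_nonneg hnpos.le (sub_nonneg.2 (hΨm.monotone hty))) fun k hk => by
      rw [← (hG.iterate_right k).eq, ← (hG.iterate_right k).eq]
      refine (dist_circle_coe_le _ _).trans ?_
      rw [abs_sub_comm, abs_of_nonneg (sub_nonneg.2 ((hGm.iterate k).monotone hty))]
      exact hΨ t y hty k hk
  choose t ht using fun i : ℕ => Ψ.continuous_iff_surjective.1 hΨc (Ψ 0 + i * ε / n)
  refine ⟨(Finset.range (⌊n / ε⌋₊ + 1)).image fun i => (t i : Circle1), ?_, ?_⟩
  · refine (Nat.cast_le.2 Finset.card_image_le).trans ?_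
    rw [Finset.card_range, Nat.cast_add_one]
    gcongr
    exact Nat.floor_le (by positivity)
  rintro q -
  induction q using QuotientAddGroup.induction_on with | H x =>
  set y := Int.fract x
  have hΨy : Ψ 0 ≤ Ψ y ∧ Ψ y < Ψ 0 + 1 := ⟨hΨm.monotone (Int.fract_nonneg x),
    (hΨm (Int.fract_lt_one x)).trans_eq (by simpa using Ψ.map_add_one 0)⟩
  set z := (Ψ y - Ψ 0) * n / ε
  have hz : 0 ≤ z := by have := hΨy.1; positivity
  have hzn : z ≤ n / ε :=
    div_le_div_of_nonneg_right (mul_le_of_le_one_left hnpos.le (by linarith)) hε.le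
  have hzi : ⌊z⌋₊ * ε ≤ (Ψ y - Ψ 0) * n := (le_div_iff₀ hε).1 (Nat.floor_le hz)
  have hzi' : (Ψ y - Ψ 0) * n < (⌊z⌋₊ + 1) * ε := (div_lt_iff₀ hε).1 (Nat.lt_floor_add_one z)
  have hgap : n * (Ψ y - Ψ (t ⌊z⌋₊)) = (Ψ y - Ψ 0) * n - ⌊z⌋₊ * ε := by
    rw [ht]; field_simp; ring
  have hty : t ⌊z⌋₊ ≤ y := hΨm.le_iff_le.1 <| sub_nonneg.1 <|
    (mul_nonneg_iff_of_pos_left hnpos).1 (by rw [hgap]; linarith)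
  rw [circle_coe_eq_coe_iff.2 ⟨⌊x⌋, (Int.fract_add_floor x).symm⟩]
  refine mem_biUnion (Finset.mem_image_of_mem _ (Finset.mem_range.2
    (Nat.lt_succ_of_le (Nat.floor_le_floor hzn)))) ((hdyn _ _ hty).trans ?_)
  rw [hgap]
  linarith

lemma hpol_le_one_of_semiconj {f : Circle1 → Circle1} {G : CircleDeg1Lift} (hGc : Continuous G)
    (hGm : StrictMono G) (hG : Semiconj ((↑) : ℝ → Circle1) G f) : hpol f ≤ 1 := by
  refine hpolOn_le_one fun ε hε => ⟨1 / ε + 1, by simp [hε.le], ?_⟩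
  filter_upwards [eventually_ne_atTop 0] with n hn
  obtain ⟨s, hs_card, hs⟩ := exists_finset_cover_of_semiconj hGc hGm hG hn hε
  have hn1 : (1 : ℝ) ≤ n := by exact_mod_cast Nat.one_le_iff_ne_zero.2 hn
  calc (coverNum f n univ ε : ℝ) ≤ s.card := by exact_mod_cast coverNum_le_card hs
    _ ≤ n / ε + 1 := hs_card
    _ ≤ (1 / ε + 1) * n := by rw [add_mul, one_div_mul_eq_div, one_mul]; linarith

/-- Orientation-preserving circle homeomorphism with irrational rotation number,
not conjugate to a rotation: its polynomial entropy equals 1. -/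
theorem hpol_circle_homeo_irrational (f : Circle1 ≃ₜ Circle1)
    (F : ℝ → ℝ) (hFcont : Continuous F) (hFmono : StrictMono F)
    (hFlift : ∀ x : ℝ, f ((x : ℝ) : Circle1) = ((F x : ℝ) : Circle1))
    (ρ : ℝ)
    (hρ : ∀ x : ℝ, Filter.Tendsto (fun n : ℕ => F^[n] x / n) Filter.atTop (nhds ρ))
    (hρnat : Irrational ρ)
    (hnconj : ¬ ConjRotCircle f) :
    hpol (⇑f) = 1 := by
  have hlift : Semiconj ((↑) : ℝ → Circle1) F f := fun x => (hFlift x).symm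
  let G : CircleDeg1Lift :=
    ⟨⟨F, hFmono.monotone⟩, map_add_one_of_semiconj_coe f.injective hFcont hFmono hlift⟩
  have hGbij : Bijective G := ⟨hFmono.injective, G.continuous_iff_surjective.1 hFcont⟩
  obtain ⟨H, hH⟩ := G.exists_semiconj_translationNumber_add hGbij
  rw [G.translationNumber_eq_of_tendsto₀ (hρ 0)] at hH
  have hHc : Continuous H := H.monotone.continuous_of_denseRange
    (CircleDeg1Lift.denseRange_of_semiconj hGbij.2 hρnat hH)
  obtain ⟨x₀, δ, hδ, hx₀⟩ := exists_forall_le_dist_iterate hlift hρnat hH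
    fun hinj => hnconj (conjRotCircle_of_semiconj hlift hHc hinj hH)
  refine le_antisymm (hpol_le_one_of_semiconj (G := G) hFcont hFmono hlift)
    (one_le_hpolOn (ε := δ / 4) (by positivity) ?_)
  filter_upwards [eventually_ne_atTop 0] with n hn
  obtain ⟨s, -, hs⟩ := exists_finset_cover_of_semiconj (G := G) hFcont hFmono hlift hn
    (show 0 < δ / 4 by positivity)
  exact le_coverNum_of_forall_le_dist_iterate f.apply_symm_apply hx₀ (by linarith) ⟨s, hs⟩
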